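/- arXiv:2005.14314 — 3 statements merged into one kernel-verified Lean document; each statement's English description precedes it below -/
import Mathlib

section
/- Let y : [0,∞) → ℝ be bounded, nonnegative and measurable, k > 0, and F : [0,∞) → ℝ nonnegative, locally integrable, with F ∈ L^q(a,∞) for some a > 0 and q ∈ [1,∞). If for almost all s ≥ 0 and all t ≥ s we have y(t) ≤ y(s) - k ∫_s^t y(τ) dτ + ∫_s^t F(τ) dτ, then lim_{t→∞} y(t) = 0. -/
open MeasureTheory Filter

private lemma aux_pointwise (x δ q : ℝ) (hδ : 0 < δ) (hq : 1 ≤ q) :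
    x ≤ δ + δ ^ (1 - q) * |x| ^ q := by
  rcases le_or_gt |x| δ with h | h
  · have h1 : 0 ≤ δ ^ (1 - q) * |x| ^ q :=
      mul_nonneg (Real.rpow_nonneg hδ.le _) (Real.rpow_nonneg (abs_nonneg x) _)
    have := le_abs_self x
    linarith
  · have hx : 0 < |x| := hδ.trans h
    have h2 : |x| ^ (1 - q) ≤ δ ^ (1 - q) :=
      Real.rpow_le_rpow_of_nonpos hδ h.le (by linarith)
    have h3 : x ≤ |x| ^ q * |x| ^ (1 - q) := by
      rw [← Real.rpow_add hx, show q + (1 - q) = 1 by ring, Real.rpow_one]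
      exact le_abs_self x
    have h4 : |x| ^ q * |x| ^ (1 - q) ≤ |x| ^ q * δ ^ (1 - q) :=
      mul_le_mul_of_nonneg_left h2 (Real.rpow_nonneg (abs_nonneg x) _)
    nlinarith [Real.rpow_nonneg (abs_nonneg x) q]

/-- Grönwall-type lemma (Lemma 2.1): if `y` is bounded, nonnegative and locally
integrable, `k > 0`, `F ≥ 0` is locally integrable with `F ∈ L^q(a,∞)` for some
`a > 0` and `q ∈ [1,∞)`, and for a.a. `s ≥ 0` and all `t ≥ s` one has
`y(t) ≤ y(s) - k ∫_s^t y + ∫_s^t F`, then `y(t) → 0` as `t → ∞`. -/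
theorem gronwall_decay_to_zero
    (y F : ℝ → ℝ) (k a q : ℝ) (hk : 0 < k) (ha : 0 < a) (hq : 1 ≤ q)
    (hbdd : ∃ M : ℝ, ∀ t : ℝ, 0 ≤ t → y t ≤ M)
    (hpos : ∀ t : ℝ, 0 ≤ t → 0 ≤ y t)
    (hyint : ∀ s t : ℝ, IntervalIntegrable y volume s t)
    (hFpos : ∀ᵐ t ∂(volume.restrict (Set.Ici (0:ℝ))), 0 ≤ F t)
    (hFint : ∀ s t : ℝ, IntervalIntegrable F volume s t)
    (hFq : MemLp F (ENNReal.ofReal q) (volume.restrict (Set.Ioi a)))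
    (hineq : ∀ᵐ s ∂(volume.restrict (Set.Ici (0:ℝ))),
      ∀ t : ℝ, s ≤ t →
        y t ≤ y s - k * (∫ τ in s..t, y τ) + ∫ τ in s..t, F τ) :
    Tendsto y atTop (nhds 0) := by
  obtain ⟨M, hM⟩ := hbdd
  have hM0 : 0 ≤ M := le_trans (hpos 0 le_rfl) (hM 0 le_rfl)
  have hq0 : (0:ℝ) < q := lt_of_lt_of_le one_pos hq
  -- integrability of |F|^q on (a,∞)
  have hg_int : IntegrableOn (fun x => |F x| ^ q) (Set.Ioi a) := by
    have h := hFq.integrable_norm_rpow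
      (by simp only [ne_eq, ENNReal.ofReal_eq_zero, not_le]; linarith)
      ENNReal.ofReal_ne_top
    simpa [IntegrableOn, Real.norm_eq_abs, ENNReal.toReal_ofReal hq0.le] using h
  -- the null set where the Grönwall inequality may fail
  have hN : volume ({s : ℝ | ¬ ∀ t, s ≤ t →
      y t ≤ y s - k * (∫ τ in s..t, y τ) + ∫ τ in s..t, F τ} ∩ Set.Ici (0:ℝ)) = 0 := by
    have h := hineq
    rw [MeasureTheory.ae_iff, Measure.restrict_apply' measurableSet_Ici] at h
    exact h
  rw [Metric.tendsto_atTop]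
  intro ε hε
  have h01 : 0 < min ε 1 := lt_min hε one_pos
  set η : ℝ := min ε 1 / 3 with hηdef
  have hη : 0 < η := by rw [hηdef]; positivity
  have hη1 : 3 * η ≤ 1 := by
    have := min_le_right ε 1; rw [hηdef]; linarith
  have hη2 : 3 * η ≤ ε := by
    have := min_le_left ε 1; rw [hηdef]; linarith
  set L : ℝ := (M + 1) / (k * η) with hLdef
  have hkη : 0 < k * η := mul_pos hk hη
  have hL : 0 < L := by rw [hLdef]; positivity
  have hkL : k * η * L = M + 1 := by
    rw [hLdef]; field_simp
  set δ : ℝ := η / (4 * L) with hδdef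
  have hδ : 0 < δ := by rw [hδdef]; positivity
  set c : ℝ := δ ^ (q - 1) * (η / 2) with hcdef
  have hc : 0 < c := by
    rw [hcdef]; exact mul_pos (Real.rpow_pos_of_pos hδ _) (by linarith)
  -- find T with small L^q tail
  have htendsto : Tendsto (fun T => ∫ x in a..T, |F x| ^ q) atTop
      (nhds (∫ x in Set.Ioi a, |F x| ^ q)) :=
    MeasureTheory.intervalIntegral_tendsto_integral_Ioi a hg_int tendsto_id
  have hev : ∀ᶠ T in atTop,
      (∫ x in Set.Ioi a, |F x| ^ q) - c < ∫ x in a..T, |F x| ^ q :=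
    htendsto.eventually (eventually_gt_nhds (by linarith))
  obtain ⟨T, ⟨h3', haT⟩, hLT⟩ :=
    ((hev.and (eventually_ge_atTop a)).and (eventually_ge_atTop L)).exists
  have hT0 : 0 < T := lt_of_lt_of_le hL hLT
  have htail : ∫ x in Set.Ioi T, |F x| ^ q ≤ c := by
    have hu : Set.Ioc a T ∪ Set.Ioi T = Set.Ioi a := Set.Ioc_union_Ioi_eq_Ioi haT
    have hdisj : Disjoint (Set.Ioc a T) (Set.Ioi T) := by
      rw [Set.disjoint_left]; rintro x ⟨_, h1⟩ h2
      exact absurd h2 (not_lt.2 h1)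
    have hsplit : ∫ x in Set.Ioi a, |F x| ^ q =
        (∫ x in Set.Ioc a T, |F x| ^ q) + ∫ x in Set.Ioi T, |F x| ^ q := by
      rw [← MeasureTheory.setIntegral_union hdisj measurableSet_Ioi
        (hg_int.mono_set (by rw [← hu]; exact Set.subset_union_left))
        (hg_int.mono_set (by rw [← hu]; exact Set.subset_union_right)), hu]
    rw [intervalIntegral.integral_of_le haT] at h3'
    linarith
  have hgT : IntegrableOn (fun x => |F x| ^ q) (Set.Ioi T) :=
    hg_int.mono_set (Set.Ioi_subset_Ioi haT)
  -- bound on ∫ F over intervals of length ≤ 2L starting after T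
  have hFbound : ∀ s u : ℝ, T ≤ s → s ≤ u → u - s ≤ 2 * L →
      (∫ τ in s..u, F τ) ≤ η := by
    intro s u hTs hsu hlen
    have hsubT : Set.Ioc s u ⊆ Set.Ioi T := fun x hx => lt_of_le_of_lt hTs hx.1
    have hg_su : IntegrableOn (fun x => |F x| ^ q) (Set.Ioc s u) := hgT.mono_set hsubT
    have hconst : IntegrableOn (fun _ : ℝ => δ) (Set.Ioc s u) :=
      MeasureTheory.integrableOn_const measure_Ioc_lt_top.ne
    have hrhs_int : IntegrableOn (fun x => δ + δ ^ (1 - q) * |F x| ^ q) (Set.Ioc s u) :=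
      hconst.add (hg_su.const_mul _)
    have step1 : ∫ x in Set.Ioc s u, F x ≤
        ∫ x in Set.Ioc s u, (δ + δ ^ (1 - q) * |F x| ^ q) :=
      MeasureTheory.integral_mono_ae (hFint s u).1 hrhs_int
        (Filter.Eventually.of_forall fun x => aux_pointwise (F x) δ q hδ hq)
    have step2 : ∫ x in Set.Ioc s u, (δ + δ ^ (1 - q) * |F x| ^ q) =
        δ * (u - s) + δ ^ (1 - q) * ∫ x in Set.Ioc s u, |F x| ^ q := by
      rw [MeasureTheory.integral_add hconst (hg_su.const_mul _),
        integral_const_mul, setIntegral_const, Real.volume_real_Ioc_of_le (by linarith),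
        smul_eq_mul]
      ring
    have step3 : ∫ x in Set.Ioc s u, |F x| ^ q ≤ ∫ x in Set.Ioi T, |F x| ^ q :=
      MeasureTheory.setIntegral_mono_set hgT
        (Filter.Eventually.of_forall fun x => Real.rpow_nonneg (abs_nonneg _) q)
        (HasSubset.Subset.eventuallyLE hsubT)
    have hnn : (0:ℝ) ≤ δ ^ (1 - q) := Real.rpow_nonneg hδ.le _
    have h5 : δ ^ (1 - q) * (∫ x in Set.Ioc s u, |F x| ^ q) ≤ δ ^ (1 - q) * c :=
      mul_le_mul_of_nonneg_left (le_trans step3 htail) hnn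
    have h6 : δ ^ (1 - q) * c = η / 2 := by
      rw [hcdef, show δ ^ (1 - q) * (δ ^ (q - 1) * (η / 2)) =
        (δ ^ (1 - q) * δ ^ (q - 1)) * (η / 2) by ring, ← Real.rpow_add hδ,
        show (1 - q) + (q - 1) = 0 by ring, Real.rpow_zero]
      ring
    have h7 : δ * (u - s) ≤ η / 2 := by
      have h8 : δ * (u - s) ≤ δ * (2 * L) := mul_le_mul_of_nonneg_left hlen hδ.le
      have h9 : δ * (2 * L) = η / 2 := by rw [hδdef]; field_simp; ring
      linarith
    rw [intervalIntegral.integral_of_le hsu]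
    linarith
  -- main estimate
  refine ⟨T + 2 * L, fun t ht => ?_⟩
  have ht2L : 0 ≤ t - 2 * L := by linarith
  have htL : T + L ≤ t - L := by linarith
  have ht0 : 0 ≤ t := by linarith
  -- find a good small point σ in (t-L, t]
  have hexists : ∃ σ, σ ∈ Set.Ioc (t - L) t ∧ y σ ≤ η ∧ ∀ u, σ ≤ u →
      y u ≤ y σ - k * (∫ τ in σ..u, y τ) + ∫ τ in σ..u, F τ := by
    by_contra hcon
    push_neg at hcon
    -- a.e. on (t-L, t], y ≥ η
    have hsub : {x : ℝ | ¬ η ≤ y x} ∩ Set.Ioc (t - L) t ⊆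
        {s : ℝ | ¬ ∀ u, s ≤ u →
          y u ≤ y s - k * (∫ τ in s..u, y τ) + ∫ τ in s..u, F τ} ∩ Set.Ici 0 := by
      rintro x ⟨hx1, hx2⟩
      refine ⟨?_, le_trans (by linarith) hx2.1.le⟩
      intro hall
      obtain ⟨u, hu1, hu2⟩ := hcon x hx2 (le_of_not_ge hx1)
      exact absurd (hall u hu1) (not_le.2 hu2)
    have hae : ∀ᵐ x ∂(volume.restrict (Set.Ioc (t - L) t)), η ≤ y x := by
      rw [MeasureTheory.ae_iff, Measure.restrict_apply' measurableSet_Ioc]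
      exact measure_mono_null hsub hN
    have hconst : IntegrableOn (fun _ : ℝ => η) (Set.Ioc (t - L) t) :=
      MeasureTheory.integrableOn_const measure_Ioc_lt_top.ne
    have hlow := MeasureTheory.integral_mono_ae hconst (hyint (t - L) t).1 hae
    rw [setIntegral_const, Real.volume_real_Ioc_of_le (by linarith),
      smul_eq_mul] at hlow
    -- pick a good point s' in (t-2L, t-L]
    have hgood : ∃ s', s' ∈ Set.Ioc (t - 2 * L) (t - L) ∧ ∀ u, s' ≤ u →
        y u ≤ y s' - k * (∫ τ in s'..u, y τ) + ∫ τ in s'..u, F τ := by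
      by_contra h2
      push_neg at h2
      have hsub2 : Set.Ioc (t - 2 * L) (t - L) ⊆
          {s : ℝ | ¬ ∀ u, s ≤ u →
            y u ≤ y s - k * (∫ τ in s..u, y τ) + ∫ τ in s..u, F τ} ∩ Set.Ici 0 := by
        intro x hx
        refine ⟨?_, le_trans (by linarith) hx.1.le⟩
        intro hall
        obtain ⟨u, hu1, hu2⟩ := h2 x hx
        exact absurd (hall u hu1) (not_le.2 hu2)
      have h3 := measure_mono_null hsub2 hN
      rw [Real.volume_Ioc, ENNReal.ofReal_eq_zero] at h3
      linarith
    obtain ⟨s', hs'mem, hs'⟩ := hgood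
    have hs'T : T ≤ s' := by
      have := hs'mem.1; linarith
    have hs't : s' ≤ t := by
      have := hs'mem.2; linarith
    have h5 := hs' t hs't
    have hF' : ∫ τ in s'..t, F τ ≤ η :=
      hFbound s' t hs'T hs't (by have := hs'mem.1; linarith)
    have hyt : 0 ≤ y t := hpos t ht0
    have hys' : y s' ≤ M := hM s' (by have := hs'mem.1; linarith)
    have hkint : k * (∫ τ in s'..t, y τ) ≤ M + η := by linarith
    have hmono : ∫ x in Set.Ioc (t - L) t, y x ≤ ∫ τ in s'..t, y τ := by
      rw [intervalIntegral.integral_of_le hs't]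
      refine MeasureTheory.setIntegral_mono_set (hyint s' t).1 ?_
        (HasSubset.Subset.eventuallyLE (Set.Ioc_subset_Ioc_left hs'mem.2))
      have hynn : ∀ᵐ x ∂(volume.restrict (Set.Ioc s' t)), 0 ≤ y x :=
        (MeasureTheory.ae_restrict_iff' measurableSet_Ioc).2
          (Filter.Eventually.of_forall fun x hx =>
            hpos x (le_trans (by have := hs'mem.1; linarith) hx.1.le))
      exact hynn
    have hfin : k * ((t - (t - L)) * η) ≤ k * (∫ τ in s'..t, y τ) :=
      mul_le_mul_of_nonneg_left (le_trans hlow hmono) hk.le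
    have : M + 1 ≤ M + η := by nlinarith
    linarith
  obtain ⟨σ, hσmem, hση, hσ⟩ := hexists
  have hσT : T ≤ σ := by have := hσmem.1; linarith
  have hσ0 : 0 ≤ σ := by linarith
  have h6 := hσ t hσmem.2
  have hF'' : ∫ τ in σ..t, F τ ≤ η :=
    hFbound σ t hσT hσmem.2 (by have := hσmem.1; linarith)
  have hy0 : 0 ≤ ∫ τ in σ..t, y τ :=
    intervalIntegral.integral_nonneg hσmem.2 fun u hu => hpos u (le_trans hσ0 hu.1)
  have hky : 0 ≤ k * (∫ τ in σ..t, y τ) := mul_nonneg hk.le hy0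
  have hyt2 : y t ≤ 2 * η := by linarith
  rw [Real.dist_eq, sub_zero, abs_of_nonneg (hpos t ht0)]
  linarith
end

section
/- For any vectors ω, ξ ∈ ℝ³ and any R > 0, the integral over the ball B_R of center 0 of (ω × x) × (ξ × x) dx equals (4πR⁵/15) (ω × ξ). -/
open MeasureTheory Real

noncomputable abbrev E3 := EuclideanSpace ℝ (Fin 3)

/-- negation of coordinate i as a linear isometry equiv -/
noncomputable def negCoord (i : Fin 3) : E3 ≃ₗᵢ[ℝ] E3 :=
  LinearIsometryEquiv.piLpCongrRight 2
    (fun j => if j = i then LinearIsometryEquiv.neg ℝ else LinearIsometryEquiv.refl ℝ ℝ)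

lemma negCoord_apply (i : Fin 3) (x : E3) (j : Fin 3) :
    negCoord i x j = if j = i then -(x j) else x j := by
  simp [negCoord, LinearIsometryEquiv.piLpCongrRight]
  split <;> simp [*]

noncomputable def swapCoord (i j : Fin 3) : E3 ≃ₗᵢ[ℝ] E3 :=
  LinearIsometryEquiv.piLpCongrLeft 2 ℝ ℝ (Equiv.swap i j)

lemma swapCoord_apply (i j : Fin 3) (x : E3) (k : Fin 3) :
    swapCoord i j x k = x (Equiv.swap i j k) := by
  simp [swapCoord, LinearIsometryEquiv.piLpCongrLeft_apply, Equiv.piCongrLeft'_apply,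
    Equiv.symm_symm_apply]

lemma integral_coord_change (e : E3 ≃ₗᵢ[ℝ] E3) (R : ℝ) (f : E3 → ℝ) :
    ∫ x in Metric.ball (0:E3) R, f (e x) = ∫ x in Metric.ball (0:E3) R, f x := by
  have h := e.measurePreserving
  have hemb : MeasurableEmbedding e := e.toHomeomorph.measurableEmbedding
  have hpre : e ⁻¹' Metric.ball (0:E3) R = Metric.ball (0:E3) R := by
    ext x
    simp [Metric.mem_ball, dist_zero_right, e.norm_map]
  conv_lhs => rw [show Metric.ball (0:E3) R = e ⁻¹' Metric.ball (0:E3) R from hpre.symm]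
  rw [h.setIntegral_preimage_emb hemb f _]

lemma integrableOn_ball_cont {F : Type*} [NormedAddCommGroup F] [NormedSpace ℝ F]
    (f : E3 → F) (hf : Continuous f) (R : ℝ) :
    IntegrableOn f (Metric.ball (0:E3) R) := by
  exact (hf.locallyIntegrable.integrableOn_isCompact
    (isCompact_closedBall (0:E3) R)).mono_set Metric.ball_subset_closedBall

lemma integral_offdiag (R : ℝ) (i j : Fin 3) (hij : i ≠ j) :
    ∫ x in Metric.ball (0:E3) R, x i * x j = 0 := by
  have h := integral_coord_change (negCoord i) R (fun x => x i * x j)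
  simp only [negCoord_apply, if_pos rfl, if_neg hij.symm, if_true, neg_mul] at h
  rw [integral_neg] at h
  linarith

lemma integral_sq_eq (R : ℝ) (i : Fin 3) :
    ∫ x in Metric.ball (0:E3) R, x i * x i = ∫ x in Metric.ball (0:E3) R, x 0 * x 0 := by
  rcases eq_or_ne i 0 with rfl | hi
  · rfl
  have h := integral_coord_change (swapCoord i 0) R (fun x => x 0 * x 0)
  simp only [swapCoord_apply, Equiv.swap_apply_def] at h
  simp only [↓reduceIte, if_neg (Ne.symm hi)] at h
  exact h

lemma volume_ball_one : (volume (Metric.ball (0:E3) 1)).toReal = 4 * π / 3 := by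
  rw [EuclideanSpace.volume_ball]
  have h3 : (Fintype.card (Fin 3) : ℝ) = 3 := by simp
  rw [Fintype.card_fin]
  have hΓ : Gamma ((3:ℝ) / 2 + 1) = 3 / 4 * Real.sqrt π := by
    rw [Gamma_add_one (by norm_num)]
    have : (3:ℝ)/2 = 1/2 + 1 := by norm_num
    rw [this, Gamma_add_one (by norm_num), Gamma_one_half_eq]
    ring
  have hπ : Real.sqrt π ^ 3 = π * Real.sqrt π := by
    rw [pow_succ, sq_sqrt pi_nonneg]
  have hsq : Real.sqrt π ≠ 0 := by positivity
  rw [ENNReal.toReal_mul]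
  push_cast
  rw [ENNReal.toReal_pow, ENNReal.toReal_ofReal (by norm_num),
    ENNReal.toReal_ofReal (by positivity)]
  rw [hΓ, hπ]
  field_simp

lemma integral_normsq_ball (R : ℝ) (hR : 0 < R) :
    ∫ x in Metric.ball (0:E3) R, ‖x‖^2 = 4 * π * R ^ 5 / 5 := by
  have key := MeasureTheory.integral_fun_norm_addHaar (volume : Measure E3)
    ((Set.Iio R).indicator (fun y => y^2))
  have hdim : Module.finrank ℝ E3 = 3 := by simp [finrank_euclideanSpace]
  rw [hdim] at key
  have hlhs : ∫ (x : E3), (Set.Iio R).indicator (fun y => y^2) ‖x‖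
      = ∫ x in Metric.ball (0:E3) R, ‖x‖^2 := by
    rw [← integral_indicator measurableSet_ball]
    congr 1
    funext x
    by_cases hx : x ∈ Metric.ball (0:E3) R
    · rw [Set.indicator_of_mem hx, Set.indicator_of_mem]
      simpa [Metric.mem_ball, dist_zero_right] using hx
    · rw [Set.indicator_of_notMem hx, Set.indicator_of_notMem]
      simpa [Metric.mem_ball, dist_zero_right] using hx
  have hrhs : ∫ y in Set.Ioi (0:ℝ), y ^ (3 - 1) • (Set.Iio R).indicator (fun y => y^2) y
      = R ^ 5 / 5 := by
    have : ∀ y : ℝ, y ^ (3-1) • (Set.Iio R).indicator (fun y => y^2) y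
        = (Set.Iio R).indicator (fun y => y^4) y := by
      intro y
      by_cases hy : y ∈ Set.Iio R
      · rw [Set.indicator_of_mem hy, Set.indicator_of_mem hy]
        simp [smul_eq_mul]; ring
      · rw [Set.indicator_of_notMem hy, Set.indicator_of_notMem hy, smul_zero]
    simp_rw [this]
    rw [setIntegral_indicator measurableSet_Iio]
    have : Set.Ioi (0:ℝ) ∩ Set.Iio R = Set.Ioo 0 R := by
      ext y; simp [Set.mem_Ioo, and_comm]
    rw [this, ← integral_Ioc_eq_integral_Ioo, ← intervalIntegral.integral_of_le hR.le,
      integral_pow]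
    norm_num
  rw [hlhs, hrhs] at key
  rw [key, measureReal_def, volume_ball_one]
  simp only [smul_eq_mul, nsmul_eq_mul]
  push_cast
  ring

lemma cont_coord (i : Fin 3) : Continuous (fun x : E3 => x i) :=
  (EuclideanSpace.proj i : E3 →L[ℝ] ℝ).continuous

lemma integral_diag (R : ℝ) (hR : 0 < R) (i : Fin 3) :
    ∫ x in Metric.ball (0:E3) R, x i * x i = 4 * π * R ^ 5 / 15 := by
  have hsum : ∫ x in Metric.ball (0:E3) R, ‖x‖^2
      = ∑ j : Fin 3, ∫ x in Metric.ball (0:E3) R, x j * x j := by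
    rw [← integral_finset_sum]
    · apply setIntegral_congr_fun measurableSet_ball
      intro x _
      show ‖x‖^2 = ∑ j : Fin 3, x j * x j
      rw [EuclideanSpace.norm_eq, sq_sqrt (by positivity)]
      exact Finset.sum_congr rfl fun j _ => by rw [Real.norm_eq_abs, sq_abs, sq]
    · intro j _
      exact integrableOn_ball_cont _ ((cont_coord j).mul (cont_coord j)) R
  have hall : ∀ j : Fin 3, ∫ x in Metric.ball (0:E3) R, x j * x j
      = ∫ x in Metric.ball (0:E3) R, x 0 * x 0 := fun j => integral_sq_eq R j
  rw [integral_normsq_ball R hR] at hsum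
  simp only [Fin.sum_univ_three, hall 1, hall 2] at hsum
  rw [hall i]
  linarith

lemma key_pointwise (a b x : Fin 3 → ℝ) :
    (crossProduct (crossProduct a x) (crossProduct b x) : Fin 3 → ℝ)
      = fun i => (∑ j, (crossProduct a b : Fin 3 → ℝ) j * x j) * x i := by
  funext i
  fin_cases i <;>
    simp [crossProduct, Fin.sum_univ_three] <;> ring

lemma main_aux (c : Fin 3 → ℝ) (R : ℝ) (hR : 0 < R) :
    (∫ x in Metric.ball (0:E3) R, (fun i => (∑ j, c j * x j) * x i : Fin 3 → ℝ))
      = fun i => (4 * π * R ^ 5 / 15) * c i := by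
  have hcont : Continuous (fun x : E3 => (fun i => (∑ j, c j * x j) * x i : Fin 3 → ℝ)) := by
    refine continuous_pi fun i => Continuous.mul ?_ (cont_coord i)
    exact continuous_finset_sum _ fun j _ => (continuous_const.mul (cont_coord j))
  have hint : IntegrableOn (fun x : E3 => (fun i => (∑ j, c j * x j) * x i : Fin 3 → ℝ))
      (Metric.ball (0:E3) R) := integrableOn_ball_cont _ hcont R
  refine funext fun i => ?_
  have hproj := (ContinuousLinearMap.proj (R := ℝ) (φ := fun _ : Fin 3 => ℝ) i).integral_comp_comm hint
  have hlhs : (∫ x in Metric.ball (0:E3) R, (fun i => (∑ j, c j * x j) * x i : Fin 3 → ℝ)) i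
      = ∫ x in Metric.ball (0:E3) R, (∑ j, c j * (x j * x i)) := by
    rw [show (∫ x in Metric.ball (0:E3) R, (fun i => (∑ j, c j * x j) * x i : Fin 3 → ℝ)) i
        = (ContinuousLinearMap.proj (R := ℝ) (φ := fun _ : Fin 3 => ℝ) i)
          (∫ x in Metric.ball (0:E3) R, (fun i => (∑ j, c j * x j) * x i : Fin 3 → ℝ)) from rfl,
      ← hproj]
    apply setIntegral_congr_fun measurableSet_ball
    intro x _
    show (∑ j, c j * x j) * x i = ∑ j, c j * (x j * x i)
    rw [Finset.sum_mul]
    exact Finset.sum_congr rfl fun j _ => mul_assoc _ _ _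
  have hsum : ∫ x in Metric.ball (0:E3) R, (∑ j, c j * (x j * x i))
      = ∑ j, c j * ∫ x in Metric.ball (0:E3) R, x j * x i := by
    rw [integral_finset_sum _ (fun j _ =>
      (integrableOn_ball_cont (fun x : E3 => x j * x i) ((cont_coord j).mul (cont_coord i)) R).const_mul (c j))]
    simp_rw [integral_const_mul]
  have hval : ∀ j, (∫ x in Metric.ball (0:E3) R, x j * x i)
      = if j = i then 4 * π * R ^ 5 / 15 else 0 := by
    intro j
    by_cases h : j = i
    · subst h; simp [integral_diag R hR j]
    · simp [h, integral_offdiag R j i h]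
  rw [hlhs, hsum]
  simp only [hval, mul_ite, mul_zero]
  rw [Finset.sum_ite_eq' Finset.univ i (fun j => c j * (4 * π * R ^ 5 / 15))]
  simp [mul_comm]

/-- `∫_{B_R} (ω × x) × (ξ × x) dx = (4πR⁵/15) (ω × ξ)` for any `ω, ξ ∈ ℝ³`, `R > 0`. -/
theorem integral_cross_cross_cross_ball
    (ω ξ : EuclideanSpace ℝ (Fin 3)) (R : ℝ) (hR : 0 < R) :
    (∫ x in Metric.ball (0 : EuclideanSpace ℝ (Fin 3)) R,
        (WithLp.toLp 2 (crossProduct (crossProduct ω x) (crossProduct ξ x) : Fin 3 → ℝ) :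
          EuclideanSpace ℝ (Fin 3)))
      = (4 * π * R ^ 5 / 15) • (WithLp.toLp 2 (crossProduct ω ξ : Fin 3 → ℝ) :
          EuclideanSpace ℝ (Fin 3)) := by
  have hfun : (fun x : E3 => (crossProduct (crossProduct ω x) (crossProduct ξ x) : Fin 3 → ℝ))
      = fun x : E3 => (fun i => (∑ j, (crossProduct ω ξ : Fin 3 → ℝ) j * x j) * x i : Fin 3 → ℝ) :=
    funext fun x => key_pointwise ω ξ x
  have hL := (PiLp.continuousLinearEquiv 2 ℝ (fun _ : Fin 3 => ℝ)).symm.integral_comp_comm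
    (μ := volume.restrict (Metric.ball (0:E3) R))
    (fun x : E3 => (crossProduct (crossProduct ω x) (crossProduct ξ x) : Fin 3 → ℝ))
  have hL' : (∫ x in Metric.ball (0:E3) R,
      (WithLp.toLp 2 (crossProduct (crossProduct ω x) (crossProduct ξ x) : Fin 3 → ℝ) : E3))
      = WithLp.toLp 2 (∫ x in Metric.ball (0:E3) R,
        (crossProduct (crossProduct ω x) (crossProduct ξ x) : Fin 3 → ℝ)) := hL
  rw [hL', hfun, main_aux (crossProduct ω ξ : Fin 3 → ℝ) R hR, ← WithLp.toLp_smul]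
  rfl
end

section
/- Let X be a Banach space, A : D(A) ⊆ X → X a sectorial operator with 0 in the resolvent set, and α ∈ (0,1]. Then for every λ in the sector of sectoriality and every w ∈ D(A^α), ‖A(λ - A)^{-1} w‖ ≤ C |λ|^{-α} ‖A^α w‖ for a constant C independent of λ and w. -/
open MeasureTheory Real

section Aux
open Set

lemma aux_rpow_min_integrable {α : ℝ} (hα0 : 0 < α) (hα1 : α < 1) {r : ℝ} (hr : 0 < r) :
    IntegrableOn (fun t : ℝ => t ^ (-α) * min t⁻¹ r⁻¹) (Set.Ioi 0) := by
  have h1 : IntegrableOn (fun t : ℝ => t ^ (-α) * min t⁻¹ r⁻¹) (Set.Ioc 0 r) := by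
    have hbase : IntegrableOn (fun t : ℝ => t ^ (-α) * r⁻¹) (Set.Ioc 0 r) := by
      have := (intervalIntegral.intervalIntegrable_rpow' (a := 0) (b := r) (r := -α)
        (by linarith)).mul_const r⁻¹
      rwa [intervalIntegrable_iff_integrableOn_Ioc_of_le hr.le] at this
    refine hbase.congr_fun (fun t ht => ?_) measurableSet_Ioc
    have h := min_eq_right (le_of_le_of_eq (inv_anti₀ ht.1 ht.2) rfl :
      r⁻¹ ≤ t⁻¹)
    rw [h]
  have h2 : IntegrableOn (fun t : ℝ => t ^ (-α) * min t⁻¹ r⁻¹) (Set.Ioi r) := by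
    have hbase : IntegrableOn (fun t : ℝ => t ^ (-α - 1)) (Set.Ioi r) :=
      integrableOn_Ioi_rpow_of_lt (by linarith) hr
    refine hbase.congr_fun (fun t ht => ?_) measurableSet_Ioi
    have ht0 : (0:ℝ) < t := hr.trans ht
    have hmin : min t⁻¹ r⁻¹ = t⁻¹ := min_eq_left (inv_anti₀ hr (le_of_lt ht))
    rw [hmin, ← Real.rpow_neg_one t, ← Real.rpow_add ht0]
    ring_nf
  have hset : Set.Ioc (0:ℝ) r ∪ Set.Ioi r = Set.Ioi 0 := Set.Ioc_union_Ioi_eq_Ioi hr.le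
  rw [← hset]
  exact h1.union h2

lemma aux_rpow_min_integral {α : ℝ} (hα0 : 0 < α) (hα1 : α < 1) {r : ℝ} (hr : 0 < r) :
    ∫ t in Set.Ioi (0:ℝ), t ^ (-α) * min t⁻¹ r⁻¹ = r ^ (-α) * (1/(1-α) + 1/α) := by
  have h1 := (aux_rpow_min_integrable hα0 hα1 hr).mono_set
    (Set.Ioc_subset_Ioi_self : Set.Ioc (0:ℝ) r ⊆ Set.Ioi 0)
  have h2 := (aux_rpow_min_integrable hα0 hα1 hr).mono_set
    (Set.Ioi_subset_Ioi hr.le)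
  have hset : Set.Ioc (0:ℝ) r ∪ Set.Ioi r = Set.Ioi 0 := Set.Ioc_union_Ioi_eq_Ioi hr.le
  rw [← hset, setIntegral_union (Set.Ioc_disjoint_Ioi le_rfl) measurableSet_Ioi h1 h2]
  have e1 : ∫ t in Set.Ioc (0:ℝ) r, t ^ (-α) * min t⁻¹ r⁻¹
      = r ^ (-α) * (1/(1-α)) := by
    rw [setIntegral_congr_fun measurableSet_Ioc
      (g := fun t : ℝ => t ^ (-α) * r⁻¹) (fun t ht => by
        rw [min_eq_right (inv_anti₀ ht.1 ht.2)])]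
    rw [← intervalIntegral.integral_of_le hr.le,
      intervalIntegral.integral_mul_const, integral_rpow (Or.inl (by linarith))]
    rw [Real.zero_rpow (by linarith : -α + 1 ≠ 0)]
    rw [show -α + 1 = 1 - α by ring]
    have : r ^ (1 - α) * r⁻¹ = r ^ (-α) := by
      rw [← Real.rpow_neg_one r, ← Real.rpow_add hr]; ring_nf
    field_simp
    rw [← this]
    field_simp
    ring
  have e2 : ∫ t in Set.Ioi r, t ^ (-α) * min t⁻¹ r⁻¹ = r ^ (-α) * (1/α) := by
    rw [setIntegral_congr_fun measurableSet_Ioi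
      (g := fun t : ℝ => t ^ (-α - 1)) (fun t ht => by
        have ht0 : (0:ℝ) < t := hr.trans ht
        rw [min_eq_left (inv_anti₀ hr (le_of_lt ht)),
          ← Real.rpow_neg_one t, ← Real.rpow_add ht0]
        ring_nf)]
    rw [integral_Ioi_rpow_of_lt (by linarith) hr]
    rw [show -α - 1 + 1 = -α by ring]
    field_simp
  rw [e1, e2]; ring
end Aux

/-- Resolvent–fractional power estimate for a sectorial operator `A` with `0 ∈ ρ(A)`
(the key bound in the proof of Proposition B.2). The (unbounded) operator `A` is
encoded through its resolvent family `Rres λ = (λ - A)⁻¹`, defined on the sector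
`S = {0} ∪ {λ ≠ 0 : ψ ≤ |arg λ|}` (so `Rres 0 = -A⁻¹`, i.e. `0 ∈ ρ(A)`), satisfying
the resolvent identity and the sectoriality bound `‖(λ - A)⁻¹‖ ≤ M/|λ|`. The bounded
operator `Aαinv = A^{-α}` is given by the Balakrishnan formula
`A^{-α} = (sin(πα)/π) ∫₀^∞ t^{-α} (t + A)^{-1} dt` for `α < 1`, and `A^{-1} = -Rres 0`
for `α = 1`. Then there is `C` such that for every `λ` in the sector and every
`w = A^{-α}u ∈ D(A^α)` (with `‖A^α w‖ = ‖u‖`),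
`‖A(λ - A)⁻¹ w‖ = ‖(λ (λ-A)⁻¹ - 1)(A^{-α} u)‖ ≤ C |λ|^{-α} ‖u‖`. -/
theorem sectorial_resolvent_fractional_power_estimate
    {X : Type*} [NormedAddCommGroup X] [NormedSpace ℂ X] [CompleteSpace X]
    (ψ : ℝ) (hψ0 : 0 < ψ) (hψπ : ψ < π)
    (Rres : ℂ → (X →L[ℂ] X))
    (hresid : ∀ lam mu : ℂ,
      (lam = 0 ∨ ψ ≤ |lam.arg|) → (mu = 0 ∨ ψ ≤ |mu.arg|) →
      Rres lam - Rres mu = (mu - lam) • (Rres lam ∘L Rres mu))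
    (M : ℝ) (hsect : ∀ lam : ℂ, lam ≠ 0 → ψ ≤ |lam.arg| → ‖Rres lam‖ ≤ M / ‖lam‖)
    (hinj : Function.Injective ⇑(Rres 0))
    (α : ℝ) (hα0 : 0 < α) (hα1 : α ≤ 1)
    (Aαinv : X →L[ℂ] X)
    (hAone : α = 1 → Aαinv = -(Rres 0))
    (hAlt : α < 1 → ∀ w : X,
      Aαinv w = (Real.sin (π * α) / π) •
        ∫ t in Set.Ioi (0:ℝ), (t ^ (-α)) • (-(Rres (-(t:ℂ)))) w) :
    ∃ C : ℝ, ∀ lam : ℂ, lam ≠ 0 → ψ ≤ |lam.arg| →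
      ∀ u : X, ‖(lam • Rres lam - 1) (Aαinv u)‖ ≤ C * ‖lam‖ ^ (-α) * ‖u‖ := by
  -- sector membership of negative reals
  have hnegt : ∀ t : ℝ, 0 < t → ψ ≤ |(-(t:ℂ)).arg| := by
    intro t ht
    rw [show (-(t:ℂ)) = ((-t:ℝ):ℂ) by push_cast; ring,
      Complex.arg_ofReal_of_neg (by linarith), abs_of_pos Real.pi_pos]
    exact hψπ.le
  have hM0 : 0 ≤ M := by
    have h := hsect (-1) (by norm_num) (hnegt 1 one_pos |>.trans_eq (by norm_num))
    rw [show ‖(-1:ℂ)‖ = 1 by norm_num, div_one] at h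
    exact (norm_nonneg _).trans h
  have hRt : ∀ t : ℝ, 0 < t → ‖Rres (-(t:ℂ))‖ ≤ M / t := by
    intro t ht
    have h := hsect (-(t:ℂ)) (by simpa using ne_of_gt ht) (hnegt t ht)
    rwa [show ‖(-(t:ℂ))‖ = t by
      rw [norm_neg, Complex.norm_real, Real.norm_eq_abs, abs_of_pos ht]] at h
  -- pointwise resolvent identity
  have hres : ∀ lam mu : ℂ, (lam = 0 ∨ ψ ≤ |lam.arg|) → (mu = 0 ∨ ψ ≤ |mu.arg|) →
      ∀ x : X, Rres lam x - Rres mu x = (mu - lam) • Rres lam (Rres mu x) := by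
    intro lam mu hl hm x
    have h := congrArg (fun T : X →L[ℂ] X => T x) (hresid lam mu hl hm)
    simpa using h
  rcases lt_or_eq_of_le hα1 with hαlt | hαeq
  · -- case α < 1
    have h1α : 0 < 1 - α := by linarith
    refine ⟨|Real.sin (π * α) / π| * ((M + 1) * M) * (1/(1-α) + 1/α), ?_⟩
    intro lam hlam harg u
    have hr0 : 0 < ‖lam‖ := norm_pos_iff.mpr hlam
    have hRlam : ‖Rres lam‖ ≤ M / ‖lam‖ := hsect lam hlam harg
    have hTnorm : ‖lam • Rres lam - 1‖ ≤ M + 1 := by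
      calc ‖lam • Rres lam - 1‖ ≤ ‖lam • Rres lam‖ + ‖(1 : X →L[ℂ] X)‖ := norm_sub_le _ _
        _ ≤ ‖lam‖ * (M / ‖lam‖) + 1 := by
            refine add_le_add ((norm_smul_le lam (Rres lam)).trans
              (mul_le_mul_of_nonneg_left hRlam (norm_nonneg lam))) ?_
            rw [ContinuousLinearMap.one_def]
            exact ContinuousLinearMap.norm_id_le
        _ = M + 1 := by rw [mul_comm, div_mul_cancel₀ _ (ne_of_gt hr0)]
    -- key identity
    have hkey : ∀ t : ℝ, 0 < t → ∀ x : X,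
        (lam • Rres lam - 1) (Rres (-(t:ℂ)) x)
          = Rres lam ((-(t:ℂ)) • Rres (-(t:ℂ)) x - x) := by
      intro t ht x
      have hid := hres lam (-(t:ℂ)) (Or.inr harg) (Or.inr (hnegt t ht)) x
      have hx : Rres lam x = Rres (-(t:ℂ)) x + ((-(t:ℂ)) - lam) • Rres lam (Rres (-(t:ℂ)) x) := by
        rw [← hid]; abel
      simp only [ContinuousLinearMap.sub_apply, ContinuousLinearMap.smul_apply,
        ContinuousLinearMap.one_apply, map_sub, _root_.map_smul]
      rw [hx, sub_smul]
      abel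
    -- pointwise bound
    have hbound : ∀ t : ℝ, 0 < t → ∀ x : X,
        ‖(lam • Rres lam - 1) (Rres (-(t:ℂ)) x)‖
          ≤ (M+1) * M * min t⁻¹ ‖lam‖⁻¹ * ‖x‖ := by
      intro t ht x
      have hRx : ‖Rres (-(t:ℂ)) x‖ ≤ M * t⁻¹ * ‖x‖ := by
        calc ‖Rres (-(t:ℂ)) x‖ ≤ ‖Rres (-(t:ℂ))‖ * ‖x‖ := (Rres _).le_opNorm x
          _ ≤ (M / t) * ‖x‖ := mul_le_mul_of_nonneg_right (hRt t ht) (norm_nonneg x)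
          _ = M * t⁻¹ * ‖x‖ := by rw [div_eq_mul_inv]
      have b1 : ‖(lam • Rres lam - 1) (Rres (-(t:ℂ)) x)‖ ≤ (M+1) * M * t⁻¹ * ‖x‖ := by
        calc ‖(lam • Rres lam - 1) (Rres (-(t:ℂ)) x)‖
            ≤ ‖lam • Rres lam - 1‖ * ‖Rres (-(t:ℂ)) x‖ := (lam • Rres lam - 1).le_opNorm _
          _ ≤ (M+1) * (M * t⁻¹ * ‖x‖) :=
              mul_le_mul hTnorm hRx (norm_nonneg _) (by linarith)
          _ = (M+1) * M * t⁻¹ * ‖x‖ := by ring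
      have b2 : ‖(lam • Rres lam - 1) (Rres (-(t:ℂ)) x)‖ ≤ (M+1) * M * ‖lam‖⁻¹ * ‖x‖ := by
        rw [hkey t ht x]
        have hnt : ‖(-(t:ℂ))‖ = t := by
          rw [norm_neg, Complex.norm_real, Real.norm_eq_abs, abs_of_pos ht]
        have hin : ‖(-(t:ℂ)) • Rres (-(t:ℂ)) x - x‖ ≤ (M+1) * ‖x‖ := by
          calc ‖(-(t:ℂ)) • Rres (-(t:ℂ)) x - x‖
              ≤ ‖(-(t:ℂ)) • Rres (-(t:ℂ)) x‖ + ‖x‖ := norm_sub_le _ _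
            _ = t * ‖Rres (-(t:ℂ)) x‖ + ‖x‖ := by rw [norm_smul, hnt]
            _ ≤ t * (M * t⁻¹ * ‖x‖) + ‖x‖ :=
                add_le_add_left (mul_le_mul_of_nonneg_left hRx ht.le) _
            _ = (M+1) * ‖x‖ := by field_simp
        calc ‖Rres lam ((-(t:ℂ)) • Rres (-(t:ℂ)) x - x)‖
            ≤ ‖Rres lam‖ * ‖(-(t:ℂ)) • Rres (-(t:ℂ)) x - x‖ := (Rres lam).le_opNorm _
          _ ≤ (M / ‖lam‖) * ((M+1) * ‖x‖) :=
              mul_le_mul hRlam hin (norm_nonneg _) (by positivity)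
          _ = (M+1) * M * ‖lam‖⁻¹ * ‖x‖ := by rw [div_eq_mul_inv]; ring
      rcases le_total t⁻¹ ‖lam‖⁻¹ with h | h
      · rw [min_eq_left h]; exact b1
      · rw [min_eq_right h]; exact b2
    -- continuity on Ioi 0
    have hcont : ContinuousOn (fun t : ℝ => Rres (-(t:ℂ)) u) (Set.Ioi 0) := by
      intro t₀ ht₀
      have ht₀' : (0:ℝ) < t₀ := ht₀
      rw [ContinuousWithinAt, ← tendsto_sub_nhds_zero_iff]
      apply squeeze_zero_norm'
        (a := fun t : ℝ => |t - t₀| * ((M / (t₀/2)) * ‖Rres (-(t₀:ℂ)) u‖))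
      · have hmem : Set.Ioi (t₀/2) ∈ nhdsWithin t₀ (Set.Ioi (0:ℝ)) :=
          mem_nhdsWithin_of_mem_nhds (isOpen_Ioi.mem_nhds (Set.mem_Ioi.mpr (by linarith)))
        filter_upwards [hmem, self_mem_nhdsWithin] with t ht hts
        have ht0 : (0:ℝ) < t := hts
        have ht' : t₀/2 < t := ht
        have hid := hres (-(t:ℂ)) (-(t₀:ℂ)) (Or.inr (hnegt t ht0)) (Or.inr (hnegt t₀ ht₀')) u
        have hc : (-(t₀:ℂ)) - (-(t:ℂ)) = ((t - t₀ : ℝ) : ℂ) := by push_cast; ring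
        rw [hid, hc, norm_smul, Complex.norm_real, Real.norm_eq_abs]
        gcongr
        calc ‖Rres (-(t:ℂ)) (Rres (-(t₀:ℂ)) u)‖
            ≤ ‖Rres (-(t:ℂ))‖ * ‖Rres (-(t₀:ℂ)) u‖ := (Rres _).le_opNorm _
          _ ≤ (M / t) * ‖Rres (-(t₀:ℂ)) u‖ :=
              mul_le_mul_of_nonneg_right (hRt t ht0) (norm_nonneg _)
          _ ≤ (M / (t₀/2)) * ‖Rres (-(t₀:ℂ)) u‖ := by
              gcongr
              all_goals first | exact hM0 | linarith
      · have hcf : Continuous fun t : ℝ =>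
            |t - t₀| * ((M / (t₀/2)) * ‖Rres (-(t₀:ℂ)) u‖) :=
          ((continuous_id.sub continuous_const).abs).mul continuous_const
        have h0 := hcf.tendsto t₀
        simp only [sub_self, abs_zero, zero_mul] at h0
        exact h0.mono_left nhdsWithin_le_nhds
    -- integrability of the integrand
    have hRuB : ∀ t : ℝ, 0 < t →
        ‖Rres (-(t:ℂ)) u‖ ≤ (M + (1+M) * ‖Rres 0‖) * min t⁻¹ 1 * ‖u‖ := by
      intro t ht
      have hRu0 : ‖Rres (-(t:ℂ)) u‖ ≤ (1+M) * (‖Rres 0‖ * ‖u‖) := by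
        have hid := hres (-(t:ℂ)) 0 (Or.inr (hnegt t ht)) (Or.inl rfl) u
        rw [show ((0:ℂ) - -(t:ℂ)) = (t:ℂ) by ring] at hid
        have hx : Rres (-(t:ℂ)) u = Rres 0 u + ((t:ℂ)) • Rres (-(t:ℂ)) (Rres 0 u) := by
          rw [← hid]; abel
        rw [hx]
        have h2 : ‖Rres (-(t:ℂ)) (Rres 0 u)‖ ≤ (M/t) * (‖Rres 0‖ * ‖u‖) := by
          calc ‖Rres (-(t:ℂ)) (Rres 0 u)‖
              ≤ ‖Rres (-(t:ℂ))‖ * ‖Rres 0 u‖ := (Rres _).le_opNorm _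
            _ ≤ (M/t) * (‖Rres 0‖ * ‖u‖) := by
                apply mul_le_mul (hRt t ht) ((Rres 0).le_opNorm u) (norm_nonneg _)
                positivity
        calc ‖Rres 0 u + ((t:ℂ)) • Rres (-(t:ℂ)) (Rres 0 u)‖
            ≤ ‖Rres 0 u‖ + ‖(t:ℂ)‖ * ‖Rres (-(t:ℂ)) (Rres 0 u)‖ := by
              rw [← norm_smul]; exact norm_add_le _ _
          _ ≤ ‖Rres 0‖ * ‖u‖ + t * ((M/t) * (‖Rres 0‖ * ‖u‖)) := by
              apply add_le_add ((Rres 0).le_opNorm u)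
              rw [show ‖(t:ℂ)‖ = t by
                rw [Complex.norm_real, Real.norm_eq_abs, abs_of_pos ht]]
              exact mul_le_mul_of_nonneg_left h2 ht.le
          _ = (1+M) * (‖Rres 0‖ * ‖u‖) := by field_simp
      have hRuM : ‖Rres (-(t:ℂ)) u‖ ≤ M * t⁻¹ * ‖u‖ := by
        calc ‖Rres (-(t:ℂ)) u‖ ≤ ‖Rres (-(t:ℂ))‖ * ‖u‖ := (Rres _).le_opNorm u
          _ ≤ (M / t) * ‖u‖ := mul_le_mul_of_nonneg_right (hRt t ht) (norm_nonneg u)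
          _ = M * t⁻¹ * ‖u‖ := by rw [div_eq_mul_inv]
      have hR0n : (0:ℝ) ≤ ‖Rres 0‖ := norm_nonneg _
      have hun : (0:ℝ) ≤ ‖u‖ := norm_nonneg _
      rcases le_total t 1 with h | h
      · rw [min_eq_right ((one_le_inv₀ ht).mpr h)]
        calc ‖Rres (-(t:ℂ)) u‖ ≤ (1+M) * (‖Rres 0‖ * ‖u‖) := hRu0
          _ ≤ (M + (1+M) * ‖Rres 0‖) * 1 * ‖u‖ := by nlinarith
      · rw [min_eq_left (inv_le_one_of_one_le₀ h)]
        have hti : (0:ℝ) ≤ t⁻¹ := by positivity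
        calc ‖Rres (-(t:ℂ)) u‖ ≤ M * t⁻¹ * ‖u‖ := hRuM
          _ ≤ (M + (1+M) * ‖Rres 0‖) * t⁻¹ * ‖u‖ := by
              have hpos : (0:ℝ) ≤ (1+M) * ‖Rres 0‖ * t⁻¹ * ‖u‖ := by positivity
              nlinarith
    -- measurability of the integrand
    have hfmeas : AEStronglyMeasurable
        (fun t : ℝ => (t ^ (-α)) • ((-(Rres (-(t:ℂ)))) u)) (volume.restrict (Set.Ioi 0)) := by
      apply ContinuousOn.aestronglyMeasurable ?_ measurableSet_Ioi
      apply ContinuousOn.smul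
      · intro t ht
        exact (Complex.continuous_ofReal.continuousAt.comp
          (Real.continuousAt_rpow_const t (-α) (Or.inl (ne_of_gt ht)))).continuousWithinAt
      · exact hcont.neg
    have hfint : IntegrableOn (fun t : ℝ => (t ^ (-α)) • ((-(Rres (-(t:ℂ)))) u)) (Set.Ioi 0) := by
      apply Integrable.mono'
        ((aux_rpow_min_integrable hα0 hαlt one_pos).const_mul ((M + (1+M) * ‖Rres 0‖) * ‖u‖))
        hfmeas
      filter_upwards [ae_restrict_mem measurableSet_Ioi] with t ht
      have ht0 : (0:ℝ) < t := ht
      have hnn : 0 ≤ t ^ (-α) := Real.rpow_nonneg ht0.le _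
      have h1 : ‖(t ^ (-α)) • ((-(Rres (-(t:ℂ)))) u)‖ = t ^ (-α) * ‖Rres (-(t:ℂ)) u‖ := by
        rw [norm_smul, Real.norm_eq_abs, abs_of_nonneg hnn, ContinuousLinearMap.neg_apply,
          norm_neg]
      rw [h1]
      calc t ^ (-α) * ‖Rres (-(t:ℂ)) u‖
          ≤ t ^ (-α) * ((M + (1+M) * ‖Rres 0‖) * min t⁻¹ 1 * ‖u‖) :=
            mul_le_mul_of_nonneg_left (hRuB t ht0) hnn
        _ = (M + (1+M) * ‖Rres 0‖) * ‖u‖ * (t ^ (-α) * min t⁻¹ 1⁻¹) := by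
            rw [inv_one]; ring
    have hswap : (lam • Rres lam - 1) (Aαinv u)
        = (Real.sin (π * α) / π) •
          ∫ t in Set.Ioi (0:ℝ),
            (lam • Rres lam - 1) ((t ^ (-α)) • ((-(Rres (-(t:ℂ)))) u)) := by
      rw [hAlt hαlt u, ContinuousLinearMap.map_smul_of_tower]
      congr 1
      exact (ContinuousLinearMap.integral_comp_comm _ hfint).symm
    rw [hswap, norm_smul, Real.norm_eq_abs]
    have hle : ‖∫ t in Set.Ioi (0:ℝ),
          (lam • Rres lam - 1) ((t ^ (-α)) • ((-(Rres (-(t:ℂ)))) u))‖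
        ≤ ∫ t in Set.Ioi (0:ℝ), (M+1) * M * ‖u‖ * (t ^ (-α) * min t⁻¹ ‖lam‖⁻¹) := by
      apply norm_integral_le_of_norm_le
        ((aux_rpow_min_integrable hα0 hαlt hr0).const_mul ((M+1) * M * ‖u‖))
      filter_upwards [ae_restrict_mem measurableSet_Ioi] with t ht
      have ht0 : (0:ℝ) < t := ht
      have hnn : 0 ≤ t ^ (-α) := Real.rpow_nonneg ht0.le _
      have h1 : (lam • Rres lam - 1) ((t ^ (-α)) • ((-(Rres (-(t:ℂ)))) u))
          = (t ^ (-α)) • (-((lam • Rres lam - 1) (Rres (-(t:ℂ)) u))) := by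
        rw [ContinuousLinearMap.map_smul_of_tower]
        congr 1
        rw [ContinuousLinearMap.neg_apply, map_neg]
      rw [h1, norm_smul, Real.norm_eq_abs, abs_of_nonneg hnn, norm_neg]
      calc t ^ (-α) * ‖(lam • Rres lam - 1) (Rres (-(t:ℂ)) u)‖
          ≤ t ^ (-α) * ((M+1) * M * min t⁻¹ ‖lam‖⁻¹ * ‖u‖) :=
            mul_le_mul_of_nonneg_left (hbound t ht0 u) hnn
        _ = (M+1) * M * ‖u‖ * (t ^ (-α) * min t⁻¹ ‖lam‖⁻¹) := by ring
    have hval : ∫ t in Set.Ioi (0:ℝ), (M+1) * M * ‖u‖ * (t ^ (-α) * min t⁻¹ ‖lam‖⁻¹)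
        = (M+1) * M * ‖u‖ * (‖lam‖ ^ (-α) * (1/(1-α) + 1/α)) := by
      rw [MeasureTheory.integral_const_mul, aux_rpow_min_integral hα0 hαlt hr0]
    calc |Real.sin (π * α) / π| * ‖∫ t in Set.Ioi (0:ℝ),
            (lam • Rres lam - 1) ((t ^ (-α)) • ((-(Rres (-(t:ℂ)))) u))‖
        ≤ |Real.sin (π * α) / π|
            * ((M+1) * M * ‖u‖ * (‖lam‖ ^ (-α) * (1/(1-α) + 1/α))) :=
          mul_le_mul_of_nonneg_left (hle.trans_eq hval) (abs_nonneg _)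
      _ = |Real.sin (π * α) / π| * ((M + 1) * M) * (1/(1-α) + 1/α)
            * ‖lam‖ ^ (-α) * ‖u‖ := by ring
  · -- case α = 1
    refine ⟨M, ?_⟩
    intro lam hlam harg u
    have hr0 : 0 < ‖lam‖ := norm_pos_iff.mpr hlam
    rw [hAone hαeq]
    have hid := hres lam 0 (Or.inr harg) (Or.inl rfl) u
    have hval : (lam • Rres lam - 1) ((-(Rres 0)) u) = Rres lam u := by
      simp only [ContinuousLinearMap.sub_apply, ContinuousLinearMap.smul_apply,
        ContinuousLinearMap.one_apply, ContinuousLinearMap.neg_apply, map_neg, smul_neg]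
      have h2 : Rres lam u = Rres 0 u + (0 - lam) • Rres lam (Rres 0 u) := by
        rw [← hid]; abel
      rw [h2, zero_sub, neg_smul]
      abel
    rw [hval, hαeq, Real.rpow_neg_one]
    calc ‖Rres lam u‖ ≤ ‖Rres lam‖ * ‖u‖ := (Rres lam).le_opNorm u
      _ ≤ (M / ‖lam‖) * ‖u‖ :=
          mul_le_mul_of_nonneg_right (hsect lam hlam harg) (norm_nonneg u)
      _ = M * ‖lam‖⁻¹ * ‖u‖ := by rw [div_eq_mul_inv]
end
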